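/- arXiv:2404.00746 — 3 statements merged into one kernel-verified Lean document; each statement's English description precedes it below -/
import Mathlib

section
/- Let S be an uncertain sequence all of whose existential probabilities are nonnegative, and let α be a pattern that occurs in S. Then for every pattern β, maxPr_S(α ++ β) ≤ maxPr_S(α) × maxPr_{S|α}(β). -/
variable {I : Type*}

/-- An uncertain sequence: a finite list of (item, existential probability) pairs. -/
abbrev USeq (I : Type*) := List (I × ℝ)

/-- An uncertain database: a finite list of uncertain sequences. -/
abbrev UDB (I : Type*) := List (USeq I)

/-- `α` occurs in `S`: some sublist of `S` has item list `α`. -/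
def Occurs (α : List I) (S : USeq I) : Prop :=
  ∃ o : USeq I, o.Sublist S ∧ o.map Prod.fst = α

/-- Maximum occurrence probability of pattern `α` in `S`
(`0` if `α` has no occurrence in `S`; `1` for the empty pattern). -/
noncomputable def maxPrS [DecidableEq I] (α : List I) (S : USeq I) : ℝ :=
  WithBot.unbotD 0 (((S.sublists.filter fun o => decide (o.map Prod.fst = α)).map
      fun o => (o.map Prod.snd).prod).maximum)

/-- Greedy projection: `projSeq α S = some S'` iff `α` occurs in `S`, in which case `S'`
is the suffix of `S` strictly after the last matched position of the greedy (leftmost)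
occurrence of `α` in `S`.  For the empty pattern it is `S` itself. -/
def projSeq [DecidableEq I] : List I → USeq I → Option (USeq I)
  | [], S => some S
  | _ :: _, [] => none
  | i :: α, (x, _) :: rest =>
      if x = i then projSeq α rest else projSeq (i :: α) rest

/-- The projected database `DB|α`. -/
def projDB [DecidableEq I] (α : List I) (DB : UDB I) : UDB I :=
  DB.filterMap (projSeq α)

/-- `P̂_D(i)`: maximum probability of an entry with item `i` over all sequences of `D`
(`0` if `i` occurs in no sequence of `D`). -/
noncomputable def Phat [DecidableEq I] (D : UDB I) (i : I) : ℝ :=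
  WithBot.unbotD 0 (((D.flatten.filter fun e => decide (e.1 = i)).map Prod.snd).maximum)

/-- `maxPr(α)` relative to `DB`: the product of per-step maximum probabilities over the
successively projected databases. -/
noncomputable def maxPrDB [DecidableEq I] (DB : UDB I) (α : List I) : ℝ :=
  ∏ k : Fin α.length, Phat (projDB (α.take k.val) DB) (α.get k)

/-- Expected support of `α` in `DB`. -/
noncomputable def expSup [DecidableEq I] (DB : UDB I) (α : List I) : ℝ :=
  (DB.map fun S => maxPrS α S).sum

/-- `expSup^cap` of a nonempty pattern (junk value `0` on the empty pattern). -/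
noncomputable def expSupCap [DecidableEq I] (DB : UDB I) (α : List I) : ℝ :=
  match α.getLast? with
  | none => 0
  | some i =>
      maxPrDB DB α.dropLast *
        ((projDB α.dropLast DB).map fun S' => maxPrS [i] S').sum

/-- Number of sequences of `D` in which item `i` occurs. -/
def supCount [DecidableEq I] (D : UDB I) (i : I) : ℕ :=
  (D.filter fun S => decide (i ∈ S.map Prod.fst)).length

/-- `expSupport^top` of a nonempty pattern (junk value `0` on the empty pattern). -/
noncomputable def expSupTop [DecidableEq I] (DB : UDB I) (α : List I) : ℝ :=
  match α.getLast? with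
  | none => 0
  | some i =>
      maxPrDB DB α.dropLast * Phat (projDB α.dropLast DB) i *
        (supCount (projDB α.dropLast DB) i : ℝ)

/-- Item `i` occurs in some sequence of `D`. -/
def ItemOccursIn (D : UDB I) (i : I) : Prop :=
  ∃ S ∈ D, i ∈ S.map Prod.fst

/-- `sWeight`: average weight of the items of a pattern. -/
noncomputable def sWeight (w : I → ℝ) (α : List I) : ℝ :=
  (α.map w).sum / (α.length : ℝ)

/-- Maximum weight among the items of a pattern (`0` for the empty pattern). -/
noncomputable def mxWs (w : I → ℝ) (α : List I) : ℝ :=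
  WithBot.unbotD 0 ((α.map w).maximum)

/-- Maximum weight among items occurring in some sequence of `D` (`0` if none). -/
noncomputable def mxWDB (w : I → ℝ) (D : UDB I) : ℝ :=
  WithBot.unbotD 0 ((D.flatten.map fun e => w e.1).maximum)

/-- `wgt^cap`. -/
noncomputable def wgtCap [DecidableEq I] (DB : UDB I) (w : I → ℝ) (α : List I) : ℝ :=
  max (mxWDB w (projDB α.dropLast DB)) (mxWs w α)

/-- Weighted expected support. -/
noncomputable def WES [DecidableEq I] (DB : UDB I) (w : I → ℝ) (α : List I) : ℝ :=
  expSup DB α * sWeight w α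

/-- `wExpSup^cap`. -/
noncomputable def wExpSupCap [DecidableEq I] (DB : UDB I) (w : I → ℝ) (α : List I) : ℝ :=
  expSupCap DB α * wgtCap DB w α

/-!
The greedy occurrence of `α` ends no later than any other occurrence of `α`. So if `t ++ u` is an
occurrence of `α ++ β` in `S` with `t` matching `α`, then `u` lies inside the suffix `S|α`, where
it is an occurrence of `β`; the probability of `t ++ u` is the product of those of `t` and `u`,
each bounded by the corresponding maximum.
-/

theorem prod_snd_nonneg {o S : USeq I} (ho : o.Sublist S) (hS : ∀ e ∈ S, 0 ≤ e.2) :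
    0 ≤ (o.map Prod.snd).prod :=
  List.prod_nonneg fun _ hx =>
    let ⟨e, he, hx⟩ := List.mem_map.1 hx
    hx ▸ hS e (ho.subset he)

section
variable [DecidableEq I]

theorem projSeq_suffix {α : List I} {S S' : USeq I} (h : projSeq α S = some S') :
    S' <:+ S := by
  fun_induction projSeq α S generalizing S' with
  | case1 S => exact Option.some.inj h ▸ List.suffix_refl S
  | case2 => simp at h
  | case3 _ _ _ _ ih | case4 _ _ _ _ _ _ ih => exact (ih h).trans (List.suffix_cons _ _)

theorem sublist_projSeq_of_append_sublist {α : List I} {S S' t u : USeq I}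
    (htu : (t ++ u).Sublist S) (ht : t.map Prod.fst = α) (h : projSeq α S = some S') :
    u.Sublist S' := by
  fun_induction projSeq α S generalizing t S' with
  | case1 S =>
    obtain rfl := List.map_eq_nil_iff.1 ht
    exact Option.some.inj h ▸ htu
  | case2 => simp at h
  | case3 _ _ _ _ ih =>
    obtain ⟨e, t, rfl, -, ht⟩ := List.map_eq_cons_iff.1 ht
    exact ih htu.of_cons_cons ht h
  | case4 _ _ _ _ _ hx ih =>
    obtain ⟨e, t, rfl, he, -⟩ := List.map_eq_cons_iff.1 ht
    refine ih ?_ ht h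
    rcases List.sublist_cons_iff.1 htu with htu | ⟨r, hr, -⟩
    · exact htu
    · obtain rfl := (List.cons.inj hr).1
      exact absurd he hx

theorem le_maxPrS {γ : List I} {S o : USeq I} (ho : o.Sublist S) (hγ : o.map Prod.fst = γ) :
    (o.map Prod.snd).prod ≤ maxPrS γ S := by
  have hmem : (o.map Prod.snd).prod ∈ (S.sublists.filter fun o => decide (o.map Prod.fst = γ)).map
      fun o => (o.map Prod.snd).prod :=
    List.mem_map_of_mem (List.mem_filter.2 ⟨List.mem_sublists.2 ho, decide_eq_true hγ⟩)
  obtain ⟨m, hm, hle⟩ := WithBot.coe_le_iff.1 (List.le_maximum_of_mem' hmem)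
  rw [maxPrS, hm]
  exact hle

theorem maxPrS_eq_zero_or_exists_sublist (γ : List I) (S : USeq I) :
    maxPrS γ S = 0 ∨
      ∃ o : USeq I, o.Sublist S ∧ o.map Prod.fst = γ ∧ maxPrS γ S = (o.map Prod.snd).prod := by
  unfold maxPrS
  cases hmax : List.maximum ((S.sublists.filter fun o => decide (o.map Prod.fst = γ)).map
      fun o => (o.map Prod.snd).prod) with
  | bot => exact Or.inl rfl
  | coe m =>
    obtain ⟨o, ho, rfl⟩ := List.mem_map.1 (List.maximum_mem hmax)
    obtain ⟨hoS, hγ⟩ := List.mem_filter.1 ho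
    exact Or.inr ⟨o, List.mem_sublists.1 hoS, of_decide_eq_true hγ, rfl⟩

theorem maxPrS_le {γ : List I} {S : USeq I} {c : ℝ} (hc : 0 ≤ c)
    (h : ∀ o : USeq I, o.Sublist S → o.map Prod.fst = γ → (o.map Prod.snd).prod ≤ c) :
    maxPrS γ S ≤ c := by
  rcases maxPrS_eq_zero_or_exists_sublist γ S with h0 | ⟨o, ho, hγ, hmax⟩
  · exact h0 ▸ hc
  · exact hmax ▸ h o ho hγ

theorem maxPrS_nonneg {S : USeq I} (hS : ∀ e ∈ S, 0 ≤ e.2) (γ : List I) : 0 ≤ maxPrS γ S := by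
  rcases maxPrS_eq_zero_or_exists_sublist γ S with h0 | ⟨o, ho, -, hmax⟩
  · exact h0.ge
  · exact hmax ▸ prod_snd_nonneg ho hS

end

theorem maxPrS_append_le_mul_general [DecidableEq I]
    (S : USeq I) (hp : ∀ e ∈ S, 0 ≤ e.2)
    (α : List I)
    (S' : USeq I) (hS' : projSeq α S = some S') (β : List I) :
    maxPrS (α ++ β) S ≤ maxPrS α S * maxPrS β S' := by
  have hS'nonneg : ∀ e ∈ S', 0 ≤ e.2 := fun e he => hp e ((projSeq_suffix hS').subset he)
  refine maxPrS_le (mul_nonneg (maxPrS_nonneg hp α) (maxPrS_nonneg hS'nonneg β)) ?_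
  intro o ho hαβ
  obtain ⟨t, u, rfl, ht, hu⟩ := List.map_eq_append_iff.1 hαβ
  have hu' : u.Sublist S' := sublist_projSeq_of_append_sublist ho ht hS'
  rw [List.map_append, List.prod_append]
  exact mul_le_mul (le_maxPrS ((List.sublist_append_left t u).trans ho) ht) (le_maxPrS hu' hu)
    (prod_snd_nonneg hu' hS'nonneg) (maxPrS_nonneg hp α)

/-- If all probabilities of `S` are nonnegative and `α` occurs in `S`, then for every
pattern `β`, `maxPr_S(α ++ β) ≤ maxPr_S(α) * maxPr_{S|α}(β)`. -/
theorem maxPrS_append_le_mul [DecidableEq I]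
    (S : USeq I) (hp : ∀ e ∈ S, 0 ≤ e.2)
    (α : List I) (hα : Occurs α S)
    (S' : USeq I) (hS' : projSeq α S = some S') (β : List I) :
    maxPrS (α ++ β) S ≤ maxPrS α S * maxPrS β S' :=
  maxPrS_append_le_mul_general S hp α S' hS' β
end

section
/- (Correctness of the SupCalc dynamic program.) Let S = [(x₁,p₁), …, (x_n,p_n)] be an uncertain sequence with p_j ≥ 0 for all j, and let α = [i₁, …, i_m] be a nonempty pattern. Define A : {0,…,m} × {0,…,n} → ℝ by: A(0,j) = 1 for all 0 ≤ j ≤ n; A(k,0) = 0 for all 1 ≤ k ≤ m; and for 1 ≤ k ≤ m and 1 ≤ j ≤ n, A(k,j) = p_j · max_{0 ≤ j' < j} A(k−1, j') if x_j = i_k, and A(k,j) = 0 otherwise. Then max_{0 ≤ j ≤ n} A(m,j) = maxPr_S(α). -/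
variable {I : Type*}

/-!
Read through its prefix maxima, row `k` of the table holds the maximal occurrence probability of
the first `k` items of `α` in the successive prefixes of `S`. This follows by induction on `k` and
then on the prefix length, from one observation: an occurrence of `β ++ [i]` in `T ++ [e]` either
lies in `T`, or is an occurrence of `β` in `T` followed by `e`, in which case `e` carries `i`.
Because probabilities are nonnegative, multiplying by the probability of `e` commutes with taking
maxima, which is exactly the recursion of the table.
-/

section MaxZero

variable {R : Type*}

/-- Agrees with `WithBot.unbotD 0 l.maximum` only on nonnegative lists, but commutes with `++` and
with multiplication by a nonnegative scalar unconditionally. -/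
def maxZero [LinearOrder R] [Zero R] (l : List R) : R := l.foldr max 0

variable [LinearOrder R]

section Zero

variable [Zero R]

@[simp] lemma maxZero_nil : maxZero ([] : List R) = 0 := rfl

@[simp] lemma maxZero_cons (a : R) (l : List R) : maxZero (a :: l) = max a (maxZero l) := rfl

lemma maxZero_nonneg (l : List R) : 0 ≤ maxZero l := by
  induction l with
  | nil => exact le_rfl
  | cons a l ih => exact le_max_of_le_right ih

lemma maxZero_append (l₁ l₂ : List R) :
    maxZero (l₁ ++ l₂) = max (maxZero l₁) (maxZero l₂) := by
  induction l₁ with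
  | nil => exact (max_eq_right (maxZero_nonneg l₂)).symm
  | cons a l ih => simp [ih, max_assoc]

lemma maxZero_eq_of_forall_eq {l : List R} {a : R} (ha : 0 ≤ a) (hl : l ≠ [])
    (h : ∀ x ∈ l, x = a) : maxZero l = a := by
  obtain ⟨n, rfl⟩ : ∃ n, l = List.replicate n a :=
    ⟨_, List.eq_replicate_iff.2 ⟨rfl, h⟩⟩
  obtain ⟨n, rfl⟩ := Nat.exists_eq_succ_of_ne_zero (by simpa using hl)
  induction n with
  | zero => simp [ha]
  | succ n ih => simp_all [List.replicate_succ]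

lemma unbotD_maximum_eq_maxZero {l : List R} (h : ∀ x ∈ l, 0 ≤ x) :
    WithBot.unbotD 0 l.maximum = maxZero l := by
  induction l with
  | nil => rfl
  | cons a l ih =>
    rw [List.maximum_cons, maxZero_cons, ← ih fun x hx => h x (by simp [hx])]
    cases l.maximum with
    | bot => simp [h a (by simp)]
    | coe b => rw [← WithBot.coe_max, WithBot.unbotD_coe, WithBot.unbotD_coe]

end Zero

lemma maxZero_map_mul [Semiring R] [PosMulMono R] {c : R} (hc : 0 ≤ c) (l : List R) :
    maxZero (l.map (c * ·)) = c * maxZero l := by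
  induction l with
  | nil => simp
  | cons a l ih => simp [ih, mul_max_of_nonneg _ _ hc]

end MaxZero

section Occurrences

variable [DecidableEq I]

def occProbs (α : List I) (S : USeq I) : List ℝ :=
  (S.sublists.filter fun o => decide (o.map Prod.fst = α)).map fun o => (o.map Prod.snd).prod

lemma occProbs_nonneg {α : List I} {S : USeq I} (hp : ∀ e ∈ S, 0 ≤ e.2) :
    ∀ x ∈ occProbs α S, 0 ≤ x := by
  simp only [occProbs, List.mem_map, List.mem_filter, List.mem_sublists]
  rintro _ ⟨o, ⟨ho, -⟩, rfl⟩
  refine List.prod_nonneg ?_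
  simp only [List.mem_map]
  rintro _ ⟨e, he, rfl⟩
  exact hp e (ho.subset he)

lemma maxPrS_eq_maxZero_occProbs {α : List I} {S : USeq I} (hp : ∀ e ∈ S, 0 ≤ e.2) :
    maxPrS α S = maxZero (occProbs α S) :=
  unbotD_maximum_eq_maxZero (occProbs_nonneg hp)

lemma maxZero_occProbs_nil (S : USeq I) : maxZero (occProbs [] S) = 1 := by
  refine maxZero_eq_of_forall_eq zero_le_one
    (List.ne_nil_of_mem (a := 1) (List.mem_map.2 ⟨[], by simp, rfl⟩)) ?_
  simp only [occProbs, List.mem_map, List.mem_filter, decide_eq_true_eq, List.map_eq_nil_iff]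
  rintro _ ⟨o, ⟨-, rfl⟩, rfl⟩
  rfl

lemma occProbs_of_ne_nil_nil {α : List I} (hα : α ≠ []) : occProbs α ([] : USeq I) = [] := by
  simp [occProbs, Ne.symm hα]

lemma occProbs_append_singleton (β : List I) (i : I) (T : USeq I) (e : I × ℝ) :
    occProbs (β ++ [i]) (T ++ [e]) =
      occProbs (β ++ [i]) T ++ if e.1 = i then (occProbs β T).map (e.2 * ·) else [] := by
  have hlast (o : USeq I) :
      (o ++ [e]).map Prod.fst = β ++ [i] ↔ e.1 = i ∧ o.map Prod.fst = β := by
    simp [and_comm, eq_comm]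
  rw [occProbs, List.sublists_concat, List.filter_append, List.map_append, List.filter_map]
  congr 1
  simp only [Function.comp_def, hlast]
  split_ifs with he
  · simp [occProbs, he, Function.comp_def, mul_comm]
  · simp [he]

lemma maxZero_occProbs_append_singleton (β : List I) (i : I) (T : USeq I) {e : I × ℝ}
    (he : 0 ≤ e.2) :
    maxZero (occProbs (β ++ [i]) (T ++ [e])) =
      max (maxZero (occProbs (β ++ [i]) T))
        (if e.1 = i then e.2 * maxZero (occProbs β T) else 0) := by
  rw [occProbs_append_singleton, maxZero_append]
  split_ifs <;> simp [maxZero_map_mul he]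

/-- The SupCalc table with `S` and `α` indexed from `0`, so that `A (k + 1) (j + 1)` is the largest
probability of an occurrence of `α.take (k + 1)` whose last entry is `S[j]`. -/
structure IsSupCalcTable (S : USeq I) (α : List I) (A : ℕ → ℕ → ℝ) : Prop where
  zero_left : ∀ j ≤ S.length, A 0 j = 1
  succ_zero : ∀ k < α.length, A (k + 1) 0 = 0
  succ_succ : ∀ k (hk : k < α.length) j (hj : j < S.length),
    A (k + 1) (j + 1) =
      if S[j].1 = α[k] then S[j].2 * WithBot.unbotD 0 (((List.range (j + 1)).map (A k)).maximum)
      else 0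

namespace IsSupCalcTable

variable {S : USeq I} {α : List I} {A : ℕ → ℕ → ℝ}

lemma nonneg (hA : IsSupCalcTable S α A) (hp : ∀ e ∈ S, 0 ≤ e.2) :
    ∀ k ≤ α.length, ∀ j ≤ S.length, 0 ≤ A k j := by
  intro k
  induction k with
  | zero => intro _ j hj; rw [hA.zero_left j hj]; exact zero_le_one
  | succ k ih =>
    rintro hk (_ | j) hj
    · rw [hA.succ_zero k hk]
    · rw [hA.succ_succ k hk j hj]
      split_ifs
      · refine mul_nonneg (hp _ (List.getElem_mem _)) ?_
        rw [unbotD_maximum_eq_maxZero]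
        · exact maxZero_nonneg _
        · simp only [List.mem_map, List.mem_range]
          rintro _ ⟨j', hj', rfl⟩
          exact ih (by omega) j' (by omega)
      · exact le_rfl

lemma unbotD_maximum_range_eq (hA : IsSupCalcTable S α A) (hp : ∀ e ∈ S, 0 ≤ e.2) {k j : ℕ}
    (hk : k ≤ α.length) (hj : j ≤ S.length + 1) :
    WithBot.unbotD 0 (((List.range j).map (A k)).maximum) = maxZero ((List.range j).map (A k)) := by
  refine unbotD_maximum_eq_maxZero ?_
  simp only [List.mem_map, List.mem_range]
  rintro _ ⟨j', hj', rfl⟩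
  exact hA.nonneg hp k hk j' (by omega)

lemma maxZero_range_eq (hA : IsSupCalcTable S α A) (hp : ∀ e ∈ S, 0 ≤ e.2) :
    ∀ k ≤ α.length, ∀ j ≤ S.length,
      maxZero ((List.range (j + 1)).map (A k)) = maxZero (occProbs (α.take k) (S.take j)) := by
  intro k
  induction k with
  | zero =>
    intro _ j hj
    rw [List.take_zero, maxZero_occProbs_nil]
    refine maxZero_eq_of_forall_eq zero_le_one (by simp) ?_
    simp only [List.mem_map, List.mem_range]
    rintro _ ⟨j', hj', rfl⟩
    exact hA.zero_left j' (by omega)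
  | succ k ih =>
    intro hk j
    have hα : α.take (k + 1) = α.take k ++ [α[k]] := List.take_succ_eq_append_getElem hk
    induction j with
    | zero =>
      intro _
      have hne : α.take (k + 1) ≠ [] :=
        hα ▸ List.append_ne_nil_of_right_ne_nil _ (List.cons_ne_nil _ _)
      rw [List.take_zero, occProbs_of_ne_nil_nil hne]
      simp [hA.succ_zero k hk]
    | succ j ihj =>
      intro hj
      rw [List.range_succ, List.map_append, maxZero_append, ihj (by omega), hα,
        List.take_succ_eq_append_getElem hj,
        maxZero_occProbs_append_singleton _ _ _ (hp _ (List.getElem_mem _)),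
        ← ih (by omega) j (by omega), ← hA.unbotD_maximum_range_eq hp (by omega) (by omega),
        ← hA.succ_succ k hk j hj]
      simp [hA.nonneg hp (k + 1) hk (j + 1) hj]

lemma unbotD_maximum_eq_maxPrS (hA : IsSupCalcTable S α A) (hp : ∀ e ∈ S, 0 ≤ e.2) :
    WithBot.unbotD 0 (((List.range (S.length + 1)).map (A α.length)).maximum) = maxPrS α S := by
  rw [hA.unbotD_maximum_range_eq hp le_rfl le_rfl, hA.maxZero_range_eq hp _ le_rfl _ le_rfl,
    List.take_length, List.take_length, maxPrS_eq_maxZero_occProbs hp]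

end IsSupCalcTable

end Occurrences

/-- Correctness of the SupCalc dynamic program.  Let `S = [(x₁,p₁), …, (xₙ,pₙ)]` with all
`pⱼ ≥ 0` and let `α = [i₁, …, iₘ]` be nonempty.  Suppose `A` satisfies: `A 0 j = 1` for
`0 ≤ j ≤ n`; `A k 0 = 0` for `1 ≤ k ≤ m`; and for `1 ≤ k ≤ m`, `1 ≤ j ≤ n`,
`A k j = pⱼ * max_{0 ≤ j' < j} A (k-1) j'` if `xⱼ = iₖ` and `A k j = 0` otherwise
(indices of `S` and `α` being 1-based).  Then `max_{0 ≤ j ≤ n} A m j = maxPr_S(α)`. -/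
theorem supCalc_dp_correct [DecidableEq I]
    (S : USeq I) (hp : ∀ e ∈ S, 0 ≤ e.2)
    (α : List I)
    (A : ℕ → ℕ → ℝ)
    (h0 : ∀ j : ℕ, j ≤ S.length → A 0 j = 1)
    (hbase : ∀ k : ℕ, 1 ≤ k → k ≤ α.length → A k 0 = 0)
    (hrec : ∀ (k j : ℕ) (hk1 : 1 ≤ k) (hk2 : k ≤ α.length)
        (hj1 : 1 ≤ j) (hj2 : j ≤ S.length),
        A k j =
          if (S.get ⟨j - 1, by omega⟩).1 = α.get ⟨k - 1, by omega⟩ then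
            (S.get ⟨j - 1, by omega⟩).2 *
              WithBot.unbotD 0 (((List.range j).map (A (k - 1))).maximum)
          else 0) :
    WithBot.unbotD 0 (((List.range (S.length + 1)).map (A α.length)).maximum) = maxPrS α S := by
  refine IsSupCalcTable.unbotD_maximum_eq_maxPrS
    ⟨h0, fun k hk => hbase (k + 1) (by omega) hk, fun k hk j hj => ?_⟩ hp
  simpa using hrec (k + 1) (j + 1) (by omega) hk (by omega) hj
end

section
/- Let DB be an uncertain database all of whose existential probabilities lie in [0,1]. Then for all patterns α and β, maxPr(α ++ β) ≤ maxPr(α); that is, the measure maxPr is anti-monotone along prefix extensions of patterns. -/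
variable {I : Type*}

/-
Projecting along `α ++ β` is projecting along `α` and then along `β`, so the factors of
`maxPr(α ++ β)` split into those of `maxPr(α)` and those of `maxPr(β)` computed over `DB|α`.
Projection only shortens sequences, so every factor is a maximum of probabilities in `[0,1]`
(or the default `0`); hence the `β`-part is at most `1` and the `α`-part is nonnegative.
-/

theorem WithBot.unbotD_maximum_mem {α : Type*} [LinearOrder α] {s : Set α} {d : α}
    {l : List α} (hd : d ∈ s) (hl : ∀ x ∈ l, x ∈ s) : l.maximum.unbotD d ∈ s := by
  rcases h : l.maximum with _ | a
  · exact hd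
  · exact hl a (List.maximum_mem h)

def ProbsInUnitInterval (D : UDB I) : Prop :=
  ∀ S ∈ D, ∀ e ∈ S, e.2 ∈ Set.Icc (0 : ℝ) 1

section Projection

variable [DecidableEq I]

theorem projSeq_sublist :
    ∀ {α : List I} {S S' : USeq I}, projSeq α S = some S' → S'.Sublist S
  | [], S, S', h => by simp_all [projSeq]
  | _ :: _, [], _, h => by simp [projSeq] at h
  | i :: α, (x, _) :: rest, S', h => by
    by_cases hx : x = i
    · simp only [projSeq, hx, if_true] at h
      exact (projSeq_sublist h).cons _
    · simp only [projSeq, hx, if_false] at h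
      exact (projSeq_sublist h).cons _

theorem projSeq_append :
    ∀ (α β : List I) (S : USeq I), projSeq (α ++ β) S = (projSeq α S).bind (projSeq β)
  | [], β, S => by simp [projSeq]
  | _ :: _, _, [] => by simp [projSeq]
  | i :: α, β, (x, _) :: rest => by
    by_cases hx : x = i
    · simp only [List.cons_append, projSeq, hx, if_true]
      exact projSeq_append α β rest
    · simp only [List.cons_append, projSeq, hx, if_false]
      exact projSeq_append (i :: α) β rest

@[simp]
theorem projDB_nil (DB : UDB I) : projDB [] DB = DB := by
  simp [projDB, projSeq]

theorem projDB_append (α β : List I) (DB : UDB I) :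
    projDB (α ++ β) DB = projDB β (projDB α DB) := by
  simp only [projDB, List.filterMap_filterMap, projSeq_append]

theorem ProbsInUnitInterval.projDB {DB : UDB I} (hDB : ProbsInUnitInterval DB) (α : List I) :
    ProbsInUnitInterval (projDB α DB) := by
  intro S' hS' e he
  obtain ⟨S, hS, hproj⟩ := List.mem_filterMap.mp hS'
  exact hDB S hS e ((projSeq_sublist hproj).subset he)

theorem ProbsInUnitInterval.Phat_mem_Icc {D : UDB I} (hD : ProbsInUnitInterval D) (i : I) :
    Phat D i ∈ Set.Icc (0 : ℝ) 1 := by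
  refine WithBot.unbotD_maximum_mem ⟨le_rfl, zero_le_one⟩ fun p hp => ?_
  obtain ⟨e, he, rfl⟩ := List.mem_map.mp hp
  obtain ⟨S, hS, heS⟩ := List.mem_flatten.mp (List.mem_filter.mp he).1
  exact hD S hS e heS

end Projection

section MaxPr

variable [DecidableEq I]

@[simp]
theorem maxPrDB_nil (DB : UDB I) : maxPrDB DB [] = 1 := by
  simp [maxPrDB]

theorem maxPrDB_cons (DB : UDB I) (i : I) (α : List I) :
    maxPrDB DB (i :: α) = Phat DB i * maxPrDB (projDB [i] DB) α := by
  rw [maxPrDB, maxPrDB]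
  refine (Fin.prod_univ_succ _).trans (congrArg₂ _ (by simp) (Finset.prod_congr rfl ?_))
  intro k _
  show Phat (projDB ([i] ++ α.take k.val) DB) (α.get k) = _
  rw [projDB_append]

theorem maxPrDB_append (DB : UDB I) (α β : List I) :
    maxPrDB DB (α ++ β) = maxPrDB DB α * maxPrDB (projDB α DB) β := by
  induction α generalizing DB with
  | nil => simp
  | cons i α ih =>
    rw [List.cons_append, maxPrDB_cons, maxPrDB_cons, ih, ← projDB_append, mul_assoc]
    rfl

theorem ProbsInUnitInterval.maxPrDB_mem_Icc {DB : UDB I} (hDB : ProbsInUnitInterval DB)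
    (α : List I) : maxPrDB DB α ∈ Set.Icc (0 : ℝ) 1 :=
  ⟨Finset.prod_nonneg fun _ _ => ((hDB.projDB _).Phat_mem_Icc _).1,
    Finset.prod_le_one (fun _ _ => ((hDB.projDB _).Phat_mem_Icc _).1)
      fun _ _ => ((hDB.projDB _).Phat_mem_Icc _).2⟩

end MaxPr

/-- If all probabilities of `DB` lie in `[0,1]`, then for all patterns `α` and `β`,
`maxPr(α ++ β) ≤ maxPr(α)`: `maxPr` is anti-monotone along prefix extensions. -/
theorem maxPrDB_append_le [DecidableEq I]
    (DB : UDB I) (hp : ∀ S ∈ DB, ∀ e ∈ S, e.2 ∈ Set.Icc (0 : ℝ) 1)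
    (α β : List I) :
    maxPrDB DB (α ++ β) ≤ maxPrDB DB α := by
  have hDB : ProbsInUnitInterval DB := hp
  rw [maxPrDB_append]
  exact mul_le_of_le_one_right (hDB.maxPrDB_mem_Icc α).1 ((hDB.projDB α).maxPrDB_mem_Icc β).2
end
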